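/- arXiv:0706.3971 — 2 statements merged into one kernel-verified Lean document; each statement's English description precedes it below -/
import Mathlib

section
/- For any surjective homomorphism π: G → Q between finitely generated groups and any finite symmetric generating set S of G, the ℓ^p-isoperimetric profile in balls satisfies J_{G,S,p}(n) ≤ J_{Q,π(S),p}(n) for all n, where J_{G,S,p}(n) is the supremum over functions f ∈ ℓ^p(G) supported in the ball B(1,n) of ‖f‖_p / sup_{s∈S} ‖λ(s)f − f‖_p. -/
open scoped ENNReal

/-- Word length with respect to a generating set `S`. -/
noncomputable def wordLength {G : Type*} [Group G] (S : Set G) (g : G) : ℕ :=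
  sInf {n | ∃ l : List G, l.length = n ∧ (∀ x ∈ l, x ∈ S) ∧ l.prod = g}

/-- The `ℓᵖ` norm of a function (with values in `ℝ≥0∞`). -/
noncomputable def epnorm {G : Type*} (p : ℝ) (f : G → ℝ) : ℝ≥0∞ :=
  (∑' x, ENNReal.ofReal (|f x| ^ p)) ^ (1 / p)

/-- The `ℓᵖ`-isoperimetric profile in balls `J_{G,S,p}(n)`: the supremum over functions
supported in the open ball `B(1,n)` of `‖f‖_p / sup_{s ∈ S} ‖λ(s)f - f‖_p`. -/
noncomputable def isoProfile (G : Type*) [Group G] (S : Set G) (p : ℝ) (n : ℕ) : ℝ≥0∞ :=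
  ⨆ f : {f : G → ℝ // ∀ x, f x ≠ 0 → wordLength S x < n},
    epnorm p f.1 / ⨆ s ∈ S, epnorm p (fun x => f.1 (s⁻¹ * x) - f.1 x)

/-!
Push `f : G → ℝ` forward to `F q = ‖f|_{π⁻¹(q)}‖_p`. Summing over the fibres gives
`‖F‖_p = ‖f‖_p`; since `π` does not increase word length, `F` is still supported in the ball.
Left translation by `s` carries the fibre over `π(s) q` to the fibre over `q`, so the reverse
triangle inequality on each fibre gives `|F (π(s)⁻¹ q) - F q| ≤ ‖(λ(s)f - f)|_{π⁻¹(q)}‖_p`, and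
summing again, `‖λ(π s)F - F‖_p ≤ ‖λ(s)f - f‖_p`.
-/

section WordLength

variable {G : Type*} [Group G] {S : Set G}

lemma exists_list_prod_eq (hSsym : ∀ s ∈ S, s⁻¹ ∈ S) (hSgen : Subgroup.closure S = ⊤) (g : G) :
    ∃ l : List G, (∀ x ∈ l, x ∈ S) ∧ l.prod = g := by
  have hS : S ∪ S⁻¹ = S := Set.union_eq_left.2 fun s hs => by simpa using hSsym _ hs
  have hg : g ∈ (Subgroup.closure S).toSubmonoid := by simp [hSgen]
  rw [Subgroup.closure_toSubmonoid, hS] at hg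
  exact Submonoid.exists_list_of_mem_closure hg

lemma exists_list_length_eq_wordLength (hSsym : ∀ s ∈ S, s⁻¹ ∈ S)
    (hSgen : Subgroup.closure S = ⊤) (g : G) :
    ∃ l : List G, l.length = wordLength S g ∧ (∀ x ∈ l, x ∈ S) ∧ l.prod = g := by
  obtain ⟨l, hl, hprod⟩ := exists_list_prod_eq hSsym hSgen g
  exact Nat.sInf_mem (s := {n | ∃ l : List G, l.length = n ∧ (∀ x ∈ l, x ∈ S) ∧ l.prod = g})
    ⟨l.length, l, rfl, hl, hprod⟩

lemma wordLength_prod_le {l : List G} (hl : ∀ x ∈ l, x ∈ S) : wordLength S l.prod ≤ l.length :=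
  Nat.sInf_le ⟨l, rfl, hl, rfl⟩

lemma wordLength_map_le {Q : Type*} [Group Q] (π : G →* Q) (hSsym : ∀ s ∈ S, s⁻¹ ∈ S)
    (hSgen : Subgroup.closure S = ⊤) (g : G) : wordLength (π '' S) (π g) ≤ wordLength S g := by
  obtain ⟨l, hlen, hl, rfl⟩ := exists_list_length_eq_wordLength hSsym hSgen g
  calc wordLength (π '' S) (π l.prod) = wordLength (π '' S) (l.map π).prod := by
        rw [map_list_prod]
    _ ≤ (l.map π).length := wordLength_prod_le fun _ hx => by
        obtain ⟨y, hy, rfl⟩ := List.mem_map.1 hx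
        exact Set.mem_image_of_mem π (hl y hy)
    _ = wordLength S l.prod := by rw [List.length_map, hlen]

lemma finite_setOf_wordLength_lt (hSfin : S.Finite) (hSsym : ∀ s ∈ S, s⁻¹ ∈ S)
    (hSgen : Subgroup.closure S = ⊤) (n : ℕ) : {g : G | wordLength S g < n}.Finite := by
  have := hSfin.to_subtype
  refine ((List.finite_length_lt S n).image fun l => (l.map Subtype.val).prod).subset ?_
  intro g hg
  obtain ⟨l, hlen, hl, rfl⟩ := exists_list_length_eq_wordLength hSsym hSgen g
  lift l to List S using hl
  rw [Set.mem_ofPred_eq, ← hlen, List.length_map] at hg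
  exact ⟨l, hg, rfl⟩

end WordLength

theorem ENNReal.Lp_add_le_tsum {ι : Type*} {p : ℝ} (hp : 1 ≤ p) (f g : ι → ℝ≥0∞) :
    (∑' i, (f i + g i) ^ p) ^ (1 / p) ≤
      (∑' i, f i ^ p) ^ (1 / p) + (∑' i, g i ^ p) ^ (1 / p) := by
  have hp0 : 0 < p := zero_lt_one.trans_le hp
  rw [← ENNReal.rpow_le_rpow_iff (z := p) hp0, ← ENNReal.rpow_mul, one_div_mul_cancel hp0.ne',
    ENNReal.rpow_one, ENNReal.tsum_eq_iSup_sum]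
  refine iSup_le fun s => ?_
  rw [← ENNReal.rpow_le_rpow_iff (z := 1 / p) (by positivity), ← ENNReal.rpow_mul,
    mul_one_div_cancel hp0.ne', ENNReal.rpow_one]
  refine (ENNReal.Lp_add_le s f g hp).trans (add_le_add ?_ ?_) <;>
    exact ENNReal.rpow_le_rpow (ENNReal.sum_le_tsum s) (by positivity)

section LpNorm

variable {ι κ : Type*} {p : ℝ}

lemma epnorm_rpow (hp : 0 < p) (f : ι → ℝ) :
    epnorm p f ^ p = ∑' i, ENNReal.ofReal |f i| ^ p := by
  rw [epnorm, ← ENNReal.rpow_mul, one_div_mul_cancel hp.ne', ENNReal.rpow_one]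
  exact tsum_congr fun i => (ENNReal.ofReal_rpow_of_nonneg (abs_nonneg _) hp.le).symm

lemma epnorm_le_epnorm_iff (hp : 0 < p) {f : ι → ℝ} {g : κ → ℝ} :
    epnorm p f ≤ epnorm p g ↔ ∑' i, ENNReal.ofReal |f i| ^ p ≤ ∑' k, ENNReal.ofReal |g k| ^ p := by
  rw [← epnorm_rpow hp, ← epnorm_rpow hp, ENNReal.rpow_le_rpow_iff hp]

lemma epnorm_comp_equiv (e : κ ≃ ι) (f : ι → ℝ) : epnorm p (f ∘ e) = epnorm p f := by
  simp only [epnorm, Function.comp_apply, e.tsum_eq fun i => ENNReal.ofReal (|f i| ^ p)]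

lemma epnorm_comp_le_of_injective (hp : 0 < p) {e : κ → ι} (he : e.Injective) (f : ι → ℝ) :
    epnorm p (f ∘ e) ≤ epnorm p f :=
  (epnorm_le_epnorm_iff hp).2 (ENNReal.tsum_comp_le_tsum_of_injective he _)

lemma epnorm_zero (hp : 0 < p) : epnorm p (0 : ι → ℝ) = 0 := by
  simp [epnorm, Real.zero_rpow hp.ne', hp]

lemma epnorm_ne_top_of_finite_support (hp : 0 < p) {f : ι → ℝ} (hf : f.support.Finite) :
    epnorm p f ≠ ⊤ := by
  refine (ENNReal.rpow_lt_top_of_nonneg (by positivity) ?_).ne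
  rw [tsum_eq_sum (s := hf.toFinset) fun i hi => by simp_all [Real.zero_rpow hp.ne']]
  exact ENNReal.sum_ne_top.2 fun _ _ => ENNReal.ofReal_ne_top

lemma epnorm_add_le (hp : 1 ≤ p) (f g : ι → ℝ) : epnorm p (f + g) ≤ epnorm p f + epnorm p g := by
  have hp0 : 0 < p := zero_lt_one.trans_le hp
  calc epnorm p (f + g)
      ≤ (∑' i, (ENNReal.ofReal |f i| + ENNReal.ofReal |g i|) ^ p) ^ (1 / p) := by
        rw [← ENNReal.rpow_le_rpow_iff (z := p) hp0, epnorm_rpow hp0, ← ENNReal.rpow_mul,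
          one_div_mul_cancel hp0.ne', ENNReal.rpow_one]
        refine ENNReal.tsum_le_tsum fun i => ENNReal.rpow_le_rpow ?_ hp0.le
        rw [← ENNReal.ofReal_add (abs_nonneg _) (abs_nonneg _)]
        exact ENNReal.ofReal_le_ofReal (abs_add_le _ _)
    _ ≤ _ := ENNReal.Lp_add_le_tsum hp _ _
    _ = epnorm p f + epnorm p g := by
        simp only [epnorm, ENNReal.ofReal_rpow_of_nonneg (abs_nonneg _) hp0.le]

lemma epnorm_sub_comm (f g : ι → ℝ) : epnorm p (f - g) = epnorm p (g - f) := by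
  simp only [epnorm, Pi.sub_apply, abs_sub_comm]

lemma toReal_epnorm_le_add (hp : 1 ≤ p) {f g : ι → ℝ} (hg : epnorm p g ≠ ⊤)
    (hfg : epnorm p (f - g) ≠ ⊤) :
    (epnorm p f).toReal ≤ (epnorm p g).toReal + (epnorm p (f - g)).toReal := by
  rw [← ENNReal.toReal_add hg hfg]
  refine ENNReal.toReal_mono (ENNReal.add_ne_top.2 ⟨hg, hfg⟩) ?_
  simpa using epnorm_add_le hp g (f - g)

lemma ofReal_abs_sub_le_epnorm_sub (hp : 1 ≤ p) {f g : ι → ℝ} (hf : epnorm p f ≠ ⊤)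
    (hg : epnorm p g ≠ ⊤) :
    ENNReal.ofReal |(epnorm p f).toReal - (epnorm p g).toReal| ≤ epnorm p (f - g) := by
  by_cases hfg : epnorm p (f - g) = ⊤
  · simp [hfg]
  have hgf : epnorm p (g - f) ≠ ⊤ := epnorm_sub_comm f g ▸ hfg
  have h₁ := toReal_epnorm_le_add hp hg hfg
  have h₂ := toReal_epnorm_le_add hp hf hgf
  rw [← epnorm_sub_comm] at h₂
  rw [← ENNReal.ofReal_toReal hfg]
  exact ENNReal.ofReal_le_ofReal (abs_sub_le_iff.2 ⟨by linarith, by linarith⟩)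

end LpNorm

section Fiber

variable {α β : Type*} (π : α → β)

noncomputable def fiberNorm (p : ℝ) (f : α → ℝ) (b : β) : ℝ :=
  (epnorm p fun a : π ⁻¹' {b} => f a).toReal

variable {p : ℝ}

lemma tsum_epnorm_fiber_rpow (hp : 0 < p) (f : α → ℝ) :
    ∑' b, epnorm p (fun a : π ⁻¹' {b} => f a) ^ p = epnorm p f ^ p := by
  simp only [epnorm_rpow hp]
  exact ENNReal.tsum_fiberwise (fun a => ENNReal.ofReal |f a| ^ p) π

lemma epnorm_fiber_ne_top (hp : 0 < p) {f : α → ℝ} (hf : epnorm p f ≠ ⊤) (b : β) :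
    epnorm p (fun a : π ⁻¹' {b} => f a) ≠ ⊤ :=
  ne_top_of_le_ne_top hf (epnorm_comp_le_of_injective hp Subtype.val_injective f)

lemma epnorm_fiberNorm (hp : 0 < p) {f : α → ℝ} (hf : epnorm p f ≠ ⊤) :
    epnorm p (fiberNorm π p f) = epnorm p f := by
  refine ENNReal.rpow_left_injective hp.ne' ?_
  simp only
  rw [epnorm_rpow hp, ← tsum_epnorm_fiber_rpow π hp]
  refine tsum_congr fun b => ?_
  rw [fiberNorm, abs_of_nonneg ENNReal.toReal_nonneg,
    ENNReal.ofReal_toReal (epnorm_fiber_ne_top π hp hf b)]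

lemma fiberNorm_eq_zero (hp : 0 < p) {f : α → ℝ} {b : β} (h : ∀ a, π a = b → f a = 0) :
    fiberNorm π p f b = 0 := by
  have : (fun a : π ⁻¹' {b} => f a) = 0 := funext fun a => h a a.2
  rw [fiberNorm, this, epnorm_zero hp, ENNReal.toReal_zero]

lemma epnorm_fiberNorm_sub_le (hp : 1 ≤ p) {f g : α → ℝ} (hf : epnorm p f ≠ ⊤)
    (hg : epnorm p g ≠ ⊤) :
    epnorm p (fiberNorm π p f - fiberNorm π p g) ≤ epnorm p (f - g) := by
  have hp0 : 0 < p := zero_lt_one.trans_le hp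
  rw [epnorm_le_epnorm_iff hp0, ← epnorm_rpow hp0 (f - g), ← tsum_epnorm_fiber_rpow π hp0]
  refine ENNReal.tsum_le_tsum fun b => ENNReal.rpow_le_rpow ?_ hp0.le
  exact ofReal_abs_sub_le_epnorm_sub hp (epnorm_fiber_ne_top π hp0 hf b)
    (epnorm_fiber_ne_top π hp0 hg b)

end Fiber

lemma fiberNorm_comp_mul_left {G Q : Type*} [Group G] [Group Q] (π : G →* Q) (p : ℝ)
    (f : G → ℝ) (s : G) (q : Q) :
    fiberNorm π p (fun x => f (s⁻¹ * x)) q = fiberNorm π p f ((π s)⁻¹ * q) := by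
  let e : π ⁻¹' {q} ≃ π ⁻¹' {(π s)⁻¹ * q} :=
    (Equiv.mulLeft s⁻¹).subtypeEquiv fun g => by simp
  exact congrArg ENNReal.toReal (epnorm_comp_equiv e fun a => f a)

theorem isoProfile_le_of_surjective_general {G Q : Type*} [Group G] [Group Q] (π : G →* Q)
    (S : Set G) (hSfin : S.Finite)
    (hSsym : ∀ s ∈ S, s⁻¹ ∈ S) (hSgen : Subgroup.closure S = ⊤)
    (p : ℝ) (hp : 1 ≤ p) (n : ℕ) :
    isoProfile G S p n ≤ isoProfile Q (π '' S) p n := by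
  have hp0 : 0 < p := zero_lt_one.trans_le hp
  refine iSup_le fun ⟨f, hf⟩ => ?_
  have hf_fin : epnorm p f ≠ ⊤ := epnorm_ne_top_of_finite_support hp0
    ((finite_setOf_wordLength_lt hSfin hSsym hSgen n).subset hf)
  have hF : ∀ q, fiberNorm π p f q ≠ 0 → wordLength (π '' S) q < n := fun q hq => by
    obtain ⟨g, rfl, hg⟩ : ∃ g, π g = q ∧ f g ≠ 0 := by
      by_contra! h
      exact hq (fiberNorm_eq_zero π hp0 h)
    exact (wordLength_map_le π hSsym hSgen g).trans_lt (hf g hg)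
  refine le_iSup_of_le ⟨fiberNorm π p f, hF⟩
    (ENNReal.div_le_div (epnorm_fiberNorm π hp0 hf_fin).ge (iSup₂_le ?_))
  rintro _ ⟨s, hs, rfl⟩
  refine le_iSup₂_of_le s hs ?_
  have hf_shift_fin : epnorm p (fun x => f (s⁻¹ * x)) ≠ ⊤ :=
    epnorm_comp_equiv (Equiv.mulLeft s⁻¹) f ▸ hf_fin
  have := epnorm_fiberNorm_sub_le π hp hf_shift_fin hf_fin
  rwa [funext (fiberNorm_comp_mul_left π p f s)] at this

theorem isoProfile_le_of_surjective {G Q : Type*} [Group G] [Group Q] (π : G →* Q)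
    (hsurj : Function.Surjective π) (S : Set G) (hSfin : S.Finite)
    (hSsym : ∀ s ∈ S, s⁻¹ ∈ S) (hSgen : Subgroup.closure S = ⊤)
    (p : ℝ) (hp : 1 ≤ p) (n : ℕ) :
    isoProfile G S p n ≤ isoProfile Q (π '' S) p n :=
  isoProfile_le_of_surjective_general π S hSfin hSsym hSgen p hp n
end

section
/- The diameter of the finite lamplighter group C_m ≀ C_n = (C_m)^{C_n} ⋊ C_n, with respect to the generating set S = {(±1₀, 0), (0, ±1)} where 1₀ ∈ (C_m)^{C_n} is the characteristic function of {0}, is at most (m+3)n. -/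
/-- The shift automorphism of `(C_m)^{C_n}` by `k ∈ C_n`. -/
def lampShift (m n : ℕ) (k : ZMod n) : (ZMod n → ZMod m) ≃+ (ZMod n → ZMod m) where
  toFun f j := f (j - k)
  invFun f j := f (j + k)
  left_inv f := by ext j; simp
  right_inv f := by ext j; simp
  map_add' f g := rfl

/-- The shift action of `C_n` on `(C_m)^{C_n}`. -/
def lampAction (m n : ℕ) :
    Multiplicative (ZMod n) →* MulAut (Multiplicative (ZMod n → ZMod m)) :=
  MonoidHom.mk' (fun k => AddEquiv.toMultiplicative (lampShift m n k.toAdd))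
    (by
      intro a b
      apply MulEquiv.ext
      intro f
      apply funext
      intro j
      show f.toAdd (j - (a.toAdd + b.toAdd)) = f.toAdd (j - a.toAdd - b.toAdd)
      rw [sub_sub])

/-- The lamplighter group `C_m ≀ C_n = (C_m)^{C_n} ⋊ C_n`. -/
abbrev Lamp (m n : ℕ) :=
  SemidirectProduct (Multiplicative (ZMod n → ZMod m)) (Multiplicative (ZMod n)) (lampAction m n)

/-- The generating set `S = {(±1₀, 0), (0, ±1)}` of the lamplighter group. -/
def lampS (m n : ℕ) : Set (Lamp m n) :=
  {SemidirectProduct.inl (Multiplicative.ofAdd (Pi.single (0 : ZMod n) (1 : ZMod m))),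
   SemidirectProduct.inl (Multiplicative.ofAdd (Pi.single (0 : ZMod n) (-1 : ZMod m))),
   SemidirectProduct.inr (Multiplicative.ofAdd (1 : ZMod n)),
   SemidirectProduct.inr (Multiplicative.ofAdd (-1 : ZMod n))}

/-!
Every element `(f, k)` of `C_m ≀ C_n` is reached by a walk of the lamplighter once around the
circle: at each position `j = 0, …, n - 1` the lamp is set to `f j` using at most `m - 1` lamp
moves and then the lamplighter steps forward, after which he is back at `0` and walks to `k`
in fewer than `n` steps. This gives a word of length at most `m n + n`.
-/

open SemidirectProduct Multiplicative Finset

section WordLength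

variable {G : Type*} [Group G] {S : Set G}

def HasWordLengthLE (S : Set G) (g : G) (c : ℕ) : Prop :=
  ∃ l : List G, l.length ≤ c ∧ (∀ x ∈ l, x ∈ S) ∧ l.prod = g

namespace HasWordLengthLE

variable {g h : G} {c d : ℕ}

lemma mono (hg : HasWordLengthLE S g c) (hcd : c ≤ d) : HasWordLengthLE S g d := by
  obtain ⟨l, hl, hS, hprod⟩ := hg
  exact ⟨l, hl.trans hcd, hS, hprod⟩

lemma mul (hg : HasWordLengthLE S g c) (hh : HasWordLengthLE S h d) :
    HasWordLengthLE S (g * h) (c + d) := by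
  obtain ⟨l, hl, hS, rfl⟩ := hg
  obtain ⟨l', hl', hS', rfl⟩ := hh
  refine ⟨l ++ l', by simp only [List.length_append]; omega, ?_, List.prod_append⟩
  simp only [List.mem_append]
  rintro x (hx | hx)
  exacts [hS x hx, hS' x hx]

lemma wordLength_le (hg : HasWordLengthLE S g c) : wordLength S g ≤ c := by
  obtain ⟨l, hl, hS, hprod⟩ := hg
  exact (Nat.sInf_le ⟨l, rfl, hS, hprod⟩ : wordLength S g ≤ l.length).trans hl

end HasWordLengthLE

lemma hasWordLengthLE_pow {s : G} (hs : s ∈ S) (k : ℕ) : HasWordLengthLE S (s ^ k) k :=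
  ⟨List.replicate k s, (List.length_replicate).le,
    fun _ hx => (List.eq_of_mem_replicate hx).symm ▸ hs, List.prod_replicate k s⟩

lemma hasWordLengthLE_of_mem {s : G} (hs : s ∈ S) : HasWordLengthLE S s 1 :=
  pow_one s ▸ hasWordLengthLE_pow hs 1

end WordLength

lemma ZMod.sum_range_natCast {n : ℕ} [NeZero n] {M : Type*} [AddCommMonoid M]
    (f : ZMod n → M) : ∑ j ∈ range n, f j = ∑ t : ZMod n, f t :=
  sum_nbij' (fun j => (j : ZMod n)) ZMod.val (fun _ _ => mem_univ _)
    (fun t _ => mem_range.2 t.val_lt) (fun _ hj => ZMod.val_cast_of_lt (mem_range.1 hj))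
    (fun t _ => ZMod.natCast_zmod_val t) (fun _ _ => rfl)

lemma SemidirectProduct.inl_mul_inr_mul_inl_mul_inr {N G : Type*} [Group N] [Group G]
    {φ : G →* MulAut N} (a b : N) (t s : G) :
    (inl a * inr t : N ⋊[φ] G) * (inl b * inr s) = inl (a * φ t b) * inr (t * s) := by
  ext <;> simp

section Lamplighter

variable {m n : ℕ}

lemma lampShift_single (t j : ZMod n) (a : ZMod m) :
    lampShift m n t (Pi.single j a) = Pi.single (j + t) a := by
  funext i
  simp [lampShift, Pi.single_apply, sub_eq_iff_eq_add]

lemma lamp_walk_succ (F : ZMod n → ZMod m) (N : ZMod n) (a : ZMod m) :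
    (inl (ofAdd F) * inr (ofAdd N) : Lamp m n) * (inl (ofAdd (Pi.single 0 a)) * inr (ofAdd 1)) =
      inl (ofAdd (F + Pi.single N a)) * inr (ofAdd (N + 1)) := by
  rw [inl_mul_inr_mul_inl_mul_inr]
  change inl (ofAdd (F + lampShift m n N (Pi.single 0 a))) * _ = _
  rw [lampShift_single, zero_add]
  rfl

lemma hasWordLengthLE_inr [NeZero n] (k : ZMod n) :
    HasWordLengthLE (lampS m n) (inr (ofAdd k)) k.val := by
  have hk : (inr (ofAdd k) : Lamp m n) = inr (ofAdd 1) ^ k.val := by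
    rw [← map_pow, ← ofAdd_nsmul, nsmul_one, ZMod.natCast_zmod_val]
  exact hk ▸ hasWordLengthLE_pow (by simp [lampS]) _

lemma hasWordLengthLE_inl_single [NeZero m] (a : ZMod m) :
    HasWordLengthLE (lampS m n) (inl (ofAdd (Pi.single 0 a))) a.val := by
  have ha : Pi.single (0 : ZMod n) a = a.val • (Pi.single 0 (1 : ZMod m) : ZMod n → ZMod m) := by
    rw [← Pi.single_smul, nsmul_one, ZMod.natCast_zmod_val]
  rw [ha, ofAdd_nsmul, map_pow]
  exact hasWordLengthLE_pow (by simp [lampS]) _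

lemma hasWordLengthLE_walk [NeZero m] (f : ZMod n → ZMod m) (N : ℕ) :
    HasWordLengthLE (lampS m n)
      (inl (ofAdd (∑ j ∈ range N, Pi.single (j : ZMod n) (f j))) * inr (ofAdd (N : ZMod n)))
      (m * N) := by
  induction N with
  | zero => exact ⟨[], by simp, by simp, by simp⟩
  | succ N ih =>
    have hstep : HasWordLengthLE (lampS m n)
        (inl (ofAdd (Pi.single 0 (f N))) * inr (ofAdd 1)) m :=
      ((hasWordLengthLE_inl_single (f N)).mul
        (hasWordLengthLE_of_mem (by simp [lampS]))).mono (f N).val_lt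
    rw [sum_range_succ, Nat.cast_succ, ← lamp_walk_succ, Nat.mul_succ]
    exact ih.mul hstep

end Lamplighter

theorem lamp_diam_le (m n : ℕ) (hm : 2 ≤ m) (hn : 1 ≤ n) (g : Lamp m n) :
    wordLength (lampS m n) g ≤ (m + 3) * n := by
  have : NeZero m := ⟨by omega⟩
  have : NeZero n := ⟨by omega⟩
  have hlamps : ∑ j ∈ range n, Pi.single (j : ZMod n) (g.left.toAdd j) = g.left.toAdd := by
    rw [ZMod.sum_range_natCast fun t => Pi.single t (g.left.toAdd t), univ_sum_single]
  have hg : g = (inl (ofAdd (∑ j ∈ range n, Pi.single (j : ZMod n) (g.left.toAdd j))) *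
      inr (ofAdd (n : ZMod n))) * inr (ofAdd g.right.toAdd) := by
    rw [hlamps, ZMod.natCast_self, ofAdd_zero, map_one, mul_one]
    exact (inl_left_mul_inr_right g).symm
  have hword := (hasWordLengthLE_walk g.left.toAdd n).mul (hasWordLengthLE_inr g.right.toAdd)
  rw [← hg] at hword
  calc wordLength (lampS m n) g ≤ m * n + g.right.toAdd.val := hword.wordLength_le
    _ ≤ (m + 3) * n := by nlinarith [g.right.toAdd.val_lt]
end
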